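/- Let p ∈ ℝ and q = 1−p. For w ∈ S(ℝ²) let (M₁w)(s,t) = s·w(s,t). Then for every w ∈ S(ℝ²) and all (x,y) ∈ ℝ², Wig_p[M₁w](x,y) = x·Wig_p[w](x,y) − q·(−i ∂_y Wig_p[w])(x,y); that is, Wig_p[M₁w] = (M₁ − qD₂) Wig_p[w]. -/

import Mathlib

open MeasureTheory SchwartzMap Complex Filter

noncomputable section




-- function-level operators on ℝ → ℂ and ℝ × ℝ → ℂ

/-- `D = -i d/dx` acting on functions `ℝ → ℂ`. -/
def cD (u : ℝ → ℂ) : ℝ → ℂ := fun x => -Complex.I * deriv u x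

/-- `D₁ = -i ∂ₓ` acting on functions `ℝ × ℝ → ℂ`. -/
def cD1 (f : ℝ × ℝ → ℂ) : ℝ × ℝ → ℂ := fun v => -Complex.I * fderiv ℝ f v (1, 0)

/-- `D₂ = -i ∂_y` acting on functions `ℝ × ℝ → ℂ`. -/
def cD2 (f : ℝ × ℝ → ℂ) : ℝ × ℝ → ℂ := fun v => -Complex.I * fderiv ℝ f v (0, 1)

/-- The Wigner-like transform with parameter `p`:
`Wig_p[f](x,y) = (2π)^{-1/2} ∫ e^{-izy} f(x+(1-p)z, x-pz) dz`. -/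
def Wig (p : ℝ) (f : ℝ × ℝ → ℂ) : ℝ × ℝ → ℂ := fun v =>
  (((2 * Real.pi) ^ (-(1/2 : ℝ)) : ℝ) : ℂ) *
    ∫ z : ℝ, Complex.exp (-(Complex.I * z * v.2)) * f (v.1 + (1 - p) * z, v.1 - p * z)

-- Weyl-Wick transform on polynomials

open MvPolynomial in
/-- `∂ₓ` on complex polynomials in two variables, as an endomorphism. -/
def pdX : Module.End ℂ (MvPolynomial (Fin 2) ℂ) := (MvPolynomial.pderiv 0).toLinearMap

open MvPolynomial in
/-- `∂_ξ` on complex polynomials in two variables, as an endomorphism. -/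
def pdXi : Module.End ℂ (MvPolynomial (Fin 2) ℂ) := (MvPolynomial.pderiv 1).toLinearMap

/-- The Laplacian `Δ = ∂ₓ² + ∂_ξ²` on complex polynomials in two variables. -/
def pLap : Module.End ℂ (MvPolynomial (Fin 2) ℂ) := pdX ^ 2 + pdXi ^ 2

/-- The Weyl-Wick transform
`W[a] = Σ_{n≥0} ((-1)^n/(4^n n!)) Δ^n Σ_{l≥0} ((-i)^l/(2^l l!)) ∂ₓ^l ∂_ξ^l a`
(all sums are finite on polynomials). -/
def weylWick (a : MvPolynomial (Fin 2) ℂ) : MvPolynomial (Fin 2) ℂ :=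
  ∑ n ∈ Finset.range (a.totalDegree + 1), (((-1 : ℂ) ^ n / (4 ^ n * n.factorial)) •
    (pLap ^ n) (∑ l ∈ Finset.range (a.totalDegree + 1),
      (((-Complex.I) ^ l / (2 ^ l * l.factorial)) • (pdX ^ l) ((pdXi ^ l) a))))

/-- The inverse Weyl-Wick transform
`W⁻¹[a] = Σ_{l≥0} (i^l/(2^l l!)) ∂ₓ^l ∂_ξ^l Σ_{n≥0} (1/(4^n n!)) Δ^n a`. -/
def weylWickInv (a : MvPolynomial (Fin 2) ℂ) : MvPolynomial (Fin 2) ℂ :=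
  ∑ l ∈ Finset.range (a.totalDegree + 1), ((Complex.I ^ l / (2 ^ l * l.factorial)) •
    (pdX ^ l) ((pdXi ^ l) (∑ n ∈ Finset.range (a.totalDegree + 1),
      ((1 / (4 ^ n * n.factorial) : ℂ) • (pLap ^ n) a))))

/-- Evaluation of a complex polynomial in two variables at a point of `ℝ²`. -/
def evalP (a : MvPolynomial (Fin 2) ℂ) (v : ℝ × ℝ) : ℂ :=
  MvPolynomial.eval ![(v.1 : ℂ), (v.2 : ℂ)] a

/-- The polynomial `Σ_{j+k≤m} c_{jk} x^j ξ^k`. -/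
def polyOf (m : ℕ) (c : ℕ → ℕ → ℂ) : MvPolynomial (Fin 2) ℂ :=
  ∑ jk ∈ (Finset.range (m + 1) ×ˢ Finset.range (m + 1)).filter (fun jk => jk.1 + jk.2 ≤ m),
    MvPolynomial.C (c jk.1 jk.2) * MvPolynomial.X 0 ^ jk.1 * MvPolynomial.X 1 ^ jk.2

/-- The coherent state `Φ_{y,η}(x) = π^{-1/4} e^{ixη} e^{-(y-x)²/2}`. -/
def coherent (y η : ℝ) : ℝ → ℂ :=
  fun t => ((Real.pi ^ (-(1/4 : ℝ)) : ℝ) : ℂ) * Complex.exp (Complex.I * t * η) *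
    ((Real.exp (-((y - t) ^ 2) / 2) : ℝ) : ℂ)

/-!
With the invertible linear substitution `S_p (x, z) := (x + (1 - p) z, x - p z)` we have
`Wig_p[f](x, y) = (2π)^{-1/2} ∫ e^{-izy} (f ∘ S_p)(x, z) dz`. The first coordinate of `S_p (x, z)`
is `x + q z`: the factor `x` comes out of the integral, and the factor `z` is produced by
`i ∂_y`, differentiating under the integral sign; Schwartz decay of `w ∘ S_p` and of its
derivative, in `z` uniformly in `x`, dominates the integrands.
-/

theorem SchwartzMap.exists_one_add_abs_snd_mul_norm_le {E : Type*} [NormedAddCommGroup E]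
    [NormedSpace ℝ E] (f : 𝓢(ℝ × ℝ, E)) :
    ∃ C, ∀ x z : ℝ, (1 + |z|) * ‖f (x, z)‖ ≤ C * (1 + z ^ 2)⁻¹ := by
  set C := 2 ^ 3 * (Finset.Iic (3, 0)).sup (fun m => SchwartzMap.seminorm ℝ m.1 m.2) f
  refine ⟨C, fun x z => ?_⟩
  have hdecay := one_add_le_sup_seminorm_apply (𝕜 := ℝ) (m := (3, 0)) le_rfl le_rfl f (x, z)
  rw [norm_iteratedFDeriv_zero] at hdecay
  have hz : |z| ≤ ‖(x, z)‖ := norm_snd_le (x, z)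
  have hsq : (1 + |z|) * (1 + z ^ 2) ≤ (1 + ‖(x, z)‖) ^ 3 := by
    calc (1 + |z|) * (1 + z ^ 2) ≤ (1 + |z|) ^ 3 := by
          nlinarith [abs_nonneg z, sq_abs z]
      _ ≤ _ := by gcongr
  rw [← div_eq_mul_inv, le_div_iff₀ (by positivity)]
  calc (1 + |z|) * ‖f (x, z)‖ * (1 + z ^ 2) = (1 + |z|) * (1 + z ^ 2) * ‖f (x, z)‖ := by ring
    _ ≤ (1 + ‖(x, z)‖) ^ 3 * ‖f (x, z)‖ := by gcongr
    _ ≤ C := hdecay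

lemma norm_cexp_neg_I_mul_ofReal_mul (z y : ℝ) : ‖cexp (-(I * z * y))‖ = 1 := by
  rw [Complex.norm_exp]; simp

def partialFourierSnd (u : ℝ × ℝ → ℂ) (v : ℝ × ℝ) : ℂ :=
  ∫ z : ℝ, cexp (-(I * z * v.2)) * u (v.1, z)

def partialFourierSndFDerivIntegrand (u : ℝ × ℝ → ℂ) (v : ℝ × ℝ) (z : ℝ) : ℝ × ℝ →L[ℝ] ℂ :=
  cexp (-(I * z * v.2)) •
    ((fderiv ℝ u (v.1, z)).comp ((ContinuousLinearMap.fst ℝ ℝ ℝ).prod 0)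
      - (I * z * u (v.1, z)) • ofRealCLM.comp (ContinuousLinearMap.snd ℝ ℝ ℝ))

section PartialFourierSnd

variable (u : 𝓢(ℝ × ℝ, ℂ))

lemma integrable_partialFourierSnd_integrand (x y : ℝ) :
    Integrable (fun z : ℝ => cexp (-(I * z * y)) * u (x, z)) := by
  obtain ⟨C, hC⟩ := u.exists_one_add_abs_snd_mul_norm_le
  refine (integrable_inv_one_add_sq.const_mul C).mono' (by fun_prop) (.of_forall fun z => ?_)
  rw [norm_mul, norm_cexp_neg_I_mul_ofReal_mul, one_mul]
  refine le_trans ?_ (hC x z)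
  nlinarith [abs_nonneg z, norm_nonneg (u (x, z))]

lemma integrable_partialFourierSnd_integrand_snd_mul (x y : ℝ) :
    Integrable (fun z : ℝ => cexp (-(I * z * y)) * ((z : ℂ) * u (x, z))) := by
  obtain ⟨C, hC⟩ := u.exists_one_add_abs_snd_mul_norm_le
  refine (integrable_inv_one_add_sq.const_mul C).mono' (by fun_prop) (.of_forall fun z => ?_)
  rw [norm_mul, norm_mul, norm_cexp_neg_I_mul_ofReal_mul, one_mul, Complex.norm_real,
    Real.norm_eq_abs]
  refine le_trans ?_ (hC x z)
  nlinarith [abs_nonneg z, norm_nonneg (u (x, z))]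

lemma hasFDerivAt_partialFourierSnd_integrand (z : ℝ) (v : ℝ × ℝ) :
    HasFDerivAt (fun v : ℝ × ℝ => cexp (-(I * z * v.2)) * u (v.1, z))
      (partialFourierSndFDerivIntegrand u v z) v := by
  have hphase : HasFDerivAt (fun v : ℝ × ℝ => cexp (-(I * z * v.2)))
      (cexp (-(I * z * v.2)) • (-(I * z)) • ofRealCLM.comp (ContinuousLinearMap.snd ℝ ℝ ℝ)) v := by
    refine HasFDerivAt.cexp ?_
    simpa [neg_mul, mul_assoc] using
      ((ofRealCLM.comp (ContinuousLinearMap.snd ℝ ℝ ℝ)).hasFDerivAt (x := v)).const_mul (-(I * z))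
  have hslice : HasFDerivAt (fun v : ℝ × ℝ => u (v.1, z))
      ((fderiv ℝ u (v.1, z)).comp ((ContinuousLinearMap.fst ℝ ℝ ℝ).prod 0)) v :=
    u.differentiableAt.hasFDerivAt.comp v (hasFDerivAt_fst.prodMk (hasFDerivAt_const z v))
  refine (hphase.mul hslice).congr_fderiv ?_
  ext <;> simp [partialFourierSndFDerivIntegrand]
  ring

lemma exists_norm_partialFourierSndFDerivIntegrand_le :
    ∃ C, ∀ v z, ‖partialFourierSndFDerivIntegrand u v z‖ ≤ C * (1 + z ^ 2)⁻¹ := by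
  obtain ⟨C₀, hC₀⟩ := u.exists_one_add_abs_snd_mul_norm_le
  obtain ⟨C₁, hC₁⟩ := (SchwartzMap.fderivCLM ℝ (ℝ × ℝ) ℂ u).exists_one_add_abs_snd_mul_norm_le
  refine ⟨C₁ + C₀, fun v z => ?_⟩
  have h₀ := hC₀ v.1 z
  have h₁ := hC₁ v.1 z
  rw [SchwartzMap.fderivCLM_apply] at h₁
  have hslice : ‖(ContinuousLinearMap.fst ℝ ℝ ℝ).prod (0 : ℝ × ℝ →L[ℝ] ℝ)‖ ≤ 1 := by
    simp [Prod.norm_def]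
  have hsnd : ‖ofRealCLM.comp (ContinuousLinearMap.snd ℝ ℝ ℝ)‖ ≤ 1 :=
    (ContinuousLinearMap.opNorm_comp_le _ _).trans (by simp)
  have hsplit : ‖partialFourierSndFDerivIntegrand u v z‖ ≤
      ‖fderiv ℝ u (v.1, z)‖ + |z| * ‖u (v.1, z)‖ := by
    rw [partialFourierSndFDerivIntegrand, norm_smul, norm_cexp_neg_I_mul_ofReal_mul, one_mul]
    refine (norm_sub_le _ _).trans (add_le_add ?_ ?_)
    · calc _ ≤ ‖fderiv ℝ u (v.1, z)‖ * 1 :=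
            (ContinuousLinearMap.opNorm_comp_le _ _).trans (by gcongr)
        _ = _ := mul_one _
    · calc _ ≤ ‖I * z * u (v.1, z)‖ * 1 :=
            (ContinuousLinearMap.opNorm_smul_le _ _).trans (by gcongr)
        _ = |z| * ‖u (v.1, z)‖ := by simp
  nlinarith [abs_nonneg z, norm_nonneg (u (v.1, z)), norm_nonneg (fderiv ℝ u (v.1, z))]

lemma integrable_partialFourierSndFDerivIntegrand (v : ℝ × ℝ) :
    Integrable (partialFourierSndFDerivIntegrand u v) := by
  obtain ⟨C, hC⟩ := exists_norm_partialFourierSndFDerivIntegrand_le u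
  have hfderiv : Continuous fun z : ℝ => fderiv ℝ u (v.1, z) :=
    ((u.smooth ⊤).continuous_fderiv (by simp)).comp (by fun_prop)
  refine (integrable_inv_one_add_sq.const_mul C).mono' ?_ (.of_forall (hC v))
  unfold partialFourierSndFDerivIntegrand
  exact Continuous.aestronglyMeasurable (by fun_prop)

lemma hasFDerivAt_partialFourierSnd (v : ℝ × ℝ) :
    HasFDerivAt (partialFourierSnd u) (∫ z, partialFourierSndFDerivIntegrand u v z) v := by
  obtain ⟨C, hC⟩ := exists_norm_partialFourierSndFDerivIntegrand_le u
  exact hasFDerivAt_integral_of_dominated_of_fderiv_le Filter.univ_mem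
    (.of_forall fun v => (integrable_partialFourierSnd_integrand u v.1 v.2).aestronglyMeasurable)
    (integrable_partialFourierSnd_integrand u v.1 v.2)
    (integrable_partialFourierSndFDerivIntegrand u v).aestronglyMeasurable
    (.of_forall fun z v _ => hC v z) (integrable_inv_one_add_sq.const_mul _)
    (.of_forall fun z v _ => hasFDerivAt_partialFourierSnd_integrand u z v)

lemma fderiv_partialFourierSnd_apply_snd (v : ℝ × ℝ) :
    fderiv ℝ (partialFourierSnd u) v (0, 1) =
      -I * partialFourierSnd (fun w => (w.2 : ℂ) * u w) v := by
  rw [(hasFDerivAt_partialFourierSnd u v).fderiv,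
    ContinuousLinearMap.integral_apply (integrable_partialFourierSndFDerivIntegrand u v),
    partialFourierSnd, ← integral_const_mul]
  congr 1 with z
  simp [partialFourierSndFDerivIntegrand, Prod.mk_zero_zero]
  ring

end PartialFourierSnd

def wigShear (p : ℝ) : (ℝ × ℝ) ≃L[ℝ] ℝ × ℝ :=
  LinearEquiv.toContinuousLinearEquiv
    { toFun := fun v => (v.1 + (1 - p) * v.2, v.1 - p * v.2)
      invFun := fun v => (p * v.1 + (1 - p) * v.2, v.1 - v.2)
      map_add' := fun v w => by ext <;> simp only [Prod.fst_add, Prod.snd_add] <;> ring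
      map_smul' := fun c v => by
        ext <;> simp only [Prod.smul_fst, Prod.smul_snd, smul_eq_mul, RingHom.id_apply] <;> ring
      left_inv := fun v => by ext <;> simp only <;> ring
      right_inv := fun v => by ext <;> simp only <;> ring }

@[simp]
lemma wigShear_apply (p : ℝ) (v : ℝ × ℝ) :
    wigShear p v = (v.1 + (1 - p) * v.2, v.1 - p * v.2) :=
  rfl

lemma wig_eq_partialFourierSnd (p : ℝ) (f : ℝ × ℝ → ℂ) :
    Wig p f = fun v => (((2 * Real.pi) ^ (-(1/2 : ℝ)) : ℝ) : ℂ) *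
      partialFourierSnd (f ∘ wigShear p) v :=
  rfl

lemma wig_fst_mul (p : ℝ) (w : 𝓢(ℝ × ℝ, ℂ)) (v : ℝ × ℝ) :
    Wig p (fun v => (v.1 : ℂ) * w v) v = v.1 * Wig p w v +
      (1 - p) * ((((2 * Real.pi) ^ (-(1/2 : ℝ)) : ℝ) : ℂ) *
        partialFourierSnd (fun v => (v.2 : ℂ) * (w ∘ wigShear p) v) v) := by
  set u := compCLMOfContinuousLinearEquiv ℝ (wigShear p) w
  have hsplit : (fun z : ℝ => cexp (-(I * z * v.2)) *
        (((wigShear p (v.1, z)).1 : ℂ) * w (wigShear p (v.1, z)))) =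
      fun z : ℝ => v.1 * (cexp (-(I * z * v.2)) * w (wigShear p (v.1, z))) +
        (1 - p) * (cexp (-(I * z * v.2)) * ((z : ℂ) * w (wigShear p (v.1, z)))) := by
    ext z
    simp only [wigShear_apply]
    push_cast
    ring
  have h₀ : Integrable fun z : ℝ => cexp (-(I * z * v.2)) * w (wigShear p (v.1, z)) :=
    integrable_partialFourierSnd_integrand u v.1 v.2
  have h₁ : Integrable fun z : ℝ => cexp (-(I * z * v.2)) * ((z : ℂ) * w (wigShear p (v.1, z))) :=
    integrable_partialFourierSnd_integrand_snd_mul u v.1 v.2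
  simp only [wig_eq_partialFourierSnd, partialFourierSnd, Function.comp_apply]
  rw [hsplit, integral_add (h₀.const_mul _) (h₁.const_mul _), integral_const_mul,
    integral_const_mul]
  ring

lemma fderiv_wig_apply_snd (p : ℝ) (w : 𝓢(ℝ × ℝ, ℂ)) (v : ℝ × ℝ) :
    fderiv ℝ (Wig p w) v (0, 1) = -I * ((((2 * Real.pi) ^ (-(1/2 : ℝ)) : ℝ) : ℂ) *
        partialFourierSnd (fun v => (v.2 : ℂ) * (w ∘ wigShear p) v) v) := by
  have hu : ⇑w ∘ wigShear p = compCLMOfContinuousLinearEquiv ℝ (wigShear p) w := rfl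
  rw [wig_eq_partialFourierSnd, hu,
    fderiv_const_mul (hasFDerivAt_partialFourierSnd _ v).differentiableAt,
    smul_apply, fderiv_partialFourierSnd_apply_snd, smul_eq_mul]
  ring

/-- For every `w ∈ S(ℝ²)`, `Wig_p[M₁ w] = (M₁ - qD₂) Wig_p[w]`
where `q = 1 - p`. -/
theorem statement18 (p q : ℝ) (hq : q = 1 - p) (w : 𝓢(ℝ × ℝ, ℂ)) (x y : ℝ) :
    Wig p (fun v : ℝ × ℝ => (v.1 : ℂ) * w v) (x, y) = (x : ℂ) * Wig p ⇑w (x, y)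
      - (q : ℂ) * (-Complex.I * fderiv ℝ (Wig p ⇑w) (x, y) (0, 1)) := by
  rw [wig_fst_mul, fderiv_wig_apply_snd, hq]
  set J := (((2 * Real.pi) ^ (-(1/2 : ℝ)) : ℝ) : ℂ) *
    partialFourierSnd (fun v => (v.2 : ℂ) * (w ∘ wigShear p) v) (x, y)
  push_cast
  linear_combination (1 - (p : ℂ)) * J * I_sq

end
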